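/- arXiv:2403.16565 — 2 statements merged into one kernel-verified Lean document; each statement's English description precedes it below -/
import Mathlib

section
/- Let Π = [[Π₁₁, Π₁₂],[Π₂₁, Π₂₂]] ∈ S^{q+r} with Π₂₂ ≺ 0. Then the set Z_r(Π) = { Z ∈ ℝ^{r×q} : [I; Z]ᵀ Π [I; Z] ⪰ 0 } is bounded. (Indeed, every Z ∈ Z_r(Π) satisfies a quadratic bound determined by Π.) -/
/-!
Testing the QMI on the unit vector `eⱼ` gives, for the column `v = Z eⱼ`,
`vᵀ (-Π₂₂) v ≤ (Π₁₁)ⱼⱼ + 2 (Π₁₂ v)ⱼ`. The left side is coercive: Cauchy–Schwarz for the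
form of `M = -Π₂₂` gives `vₖ² ≤ (vᵀ M v) (M⁻¹)ₖₖ`, hence `‖v‖∞² ≤ tr (M⁻¹) · vᵀ M v`, while the
right side grows at most linearly in `‖v‖∞`. So `‖v‖∞` is bounded in terms of `Π` alone.
-/

open Matrix

theorem le_one_add_add_of_sq_le_add_mul {u A B : ℝ} (hu : 0 ≤ u) (hA : 0 ≤ A) (hB : 0 ≤ B)
    (h : u ^ 2 ≤ A + B * u) : u ≤ 1 + A + B := by
  nlinarith

namespace Matrix

theorem PosDef.sq_apply_le_dotProduct_mulVec_mul_inv_apply {n : Type*} [Fintype n]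
    [DecidableEq n] {M : Matrix n n ℝ} (hM : M.PosDef)
    (v : n → ℝ) (k : n) : v k ^ 2 ≤ (v ⬝ᵥ M *ᵥ v) * M⁻¹ k k := by
  have hsymm : (toBilin' M).IsSymm :=
    isSymm_toBilin'_iff_isSymm.mpr (show Mᵀ = M by simpa using hM.isHermitian.eq)
  -- `M⁻¹ eₖ` is the vector representing the coordinate `vₖ` in the inner product of `M`.
  have hcs := (toBilin' M).apply_sq_le_of_symm
    (fun x => by simpa [toBilin'_apply'] using hM.posSemidef.dotProduct_mulVec_nonneg x)
    (LinearMap.BilinForm.isSymm_iff.mp hsymm) v (M⁻¹.col k)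
  have hMy : M *ᵥ M⁻¹.col k = Pi.single k 1 := by
    rw [← mulVec_single_one, mulVec_mulVec,
      mul_nonsing_inv _ (isUnit_iff_isUnit_det M |>.mp hM.isUnit), one_mulVec]
  simpa only [toBilin'_apply', hMy, dotProduct_single_one, col_apply] using hcs

theorem PosDef.sq_norm_le_trace_inv_mul {n : Type*} [Fintype n] [DecidableEq n]
    {M : Matrix n n ℝ} (hM : M.PosDef) (v : n → ℝ) :
    ‖v‖ ^ 2 ≤ M⁻¹.trace * (v ⬝ᵥ M *ᵥ v) := by
  have hform : 0 ≤ v ⬝ᵥ M *ᵥ v := by simpa using hM.posSemidef.dotProduct_mulVec_nonneg v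
  have hinv : M⁻¹.PosSemidef := hM.inv.posSemidef
  have hentry (k : n) : |v k| ≤ √(M⁻¹.trace * (v ⬝ᵥ M *ᵥ v)) := by
    refine Real.abs_le_sqrt ?_
    calc v k ^ 2 ≤ (v ⬝ᵥ M *ᵥ v) * M⁻¹ k k := hM.sq_apply_le_dotProduct_mulVec_mul_inv_apply v k
      _ ≤ (v ⬝ᵥ M *ᵥ v) * M⁻¹.trace := by
        gcongr
        exact Finset.single_le_sum (f := fun i => M⁻¹ i i) (fun i _ => hinv.diag_nonneg)
          (Finset.mem_univ k)
      _ = M⁻¹.trace * (v ⬝ᵥ M *ᵥ v) := mul_comm _ _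
  have hnorm : ‖v‖ ≤ √(M⁻¹.trace * (v ⬝ᵥ M *ᵥ v)) :=
    (pi_norm_le_iff_of_nonneg (Real.sqrt_nonneg _)).mpr hentry
  exact (Real.le_sqrt (norm_nonneg v) (mul_nonneg hinv.trace_nonneg hform)).mp hnorm

theorem dotProduct_fromRows_one_mul_fromBlocks_mulVec {m n R : Type*} [Fintype m] [Fintype n]
    [DecidableEq m] [CommRing R]
    (P11 : Matrix m m R) (P12 : Matrix m n R) (P22 : Matrix n n R) (Z : Matrix n m R)
    (x : m → R) :
    x ⬝ᵥ ((fromRows (1 : Matrix m m R) Z)ᵀ * fromBlocks P11 P12 P12ᵀ P22 *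
        fromRows (1 : Matrix m m R) Z) *ᵥ x =
      x ⬝ᵥ P11 *ᵥ x + 2 * (x ⬝ᵥ P12 *ᵥ (Z *ᵥ x)) + (Z *ᵥ x) ⬝ᵥ P22 *ᵥ (Z *ᵥ x) := by
  rw [← mulVec_mulVec, ← mulVec_mulVec, dotProduct_mulVec, vecMul_transpose, fromRows_mulVec,
    one_mulVec, fromBlocks_mulVec, sumElim_dotProduct_sumElim, dotProduct_add, dotProduct_add,
    Sum.elim_comp_inl, Sum.elim_comp_inr, dotProduct_mulVec (Z *ᵥ x), vecMul_transpose,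
    dotProduct_comm (P12 *ᵥ _)]
  ring

theorem abs_mulVec_apply_le {m n : Type*} [Fintype n] (A : Matrix m n ℝ) (v : n → ℝ) (i : m) :
    |(A *ᵥ v) i| ≤ (∑ k, |A i k|) * ‖v‖ := by
  rw [Finset.sum_mul]
  refine (Finset.abs_sum_le_sum_abs _ _).trans (Finset.sum_le_sum fun k _ => ?_)
  rw [abs_mul]
  gcongr
  exact norm_le_pi_norm v k

theorem norm_col_le_of_posSemidef_fromRows_one {m n : Type*} [Fintype m] [Fintype n]
    [DecidableEq m] [DecidableEq n] {P11 : Matrix m m ℝ} {P12 : Matrix m n ℝ}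
    {P22 : Matrix n n ℝ} {Z : Matrix n m ℝ} (hP22 : (-P22).PosDef)
    (hZ : ((fromRows (1 : Matrix m m ℝ) Z)ᵀ * fromBlocks P11 P12 P12ᵀ P22 *
      fromRows (1 : Matrix m m ℝ) Z).PosSemidef) (j : m) :
    ‖Z.col j‖ ≤ 1 + (-P22)⁻¹.trace * |P11 j j| + 2 * (-P22)⁻¹.trace * ∑ k, |P12 j k| := by
  set c := (-P22)⁻¹.trace
  set v := Z.col j
  have hc : 0 ≤ c := hP22.inv.posSemidef.trace_nonneg
  have hfeas : 0 ≤ P11 j j + 2 * (P12 *ᵥ v) j + v ⬝ᵥ P22 *ᵥ v := by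
    have h := hZ.dotProduct_mulVec_nonneg (Pi.single j 1)
    rw [star_trivial, dotProduct_fromRows_one_mul_fromBlocks_mulVec] at h
    simpa only [mulVec_single_one, single_one_dotProduct, col_apply] using h
  have hcoer := hP22.sq_norm_le_trace_inv_mul v
  have hlin := abs_mulVec_apply_le P12 v j
  have hquad : ‖v‖ ^ 2 ≤ c * |P11 j j| + 2 * c * (∑ k, |P12 j k|) * ‖v‖ :=
    calc ‖v‖ ^ 2 ≤ c * (v ⬝ᵥ (-P22) *ᵥ v) := hcoer
      _ ≤ c * (P11 j j + 2 * (P12 *ᵥ v) j) := by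
        gcongr
        rw [neg_mulVec, dotProduct_neg]
        linarith
      _ ≤ c * (|P11 j j| + 2 * ((∑ k, |P12 j k|) * ‖v‖)) := by
        gcongr
        · exact le_abs_self _
        · exact (le_abs_self _).trans hlin
      _ = c * |P11 j j| + 2 * c * (∑ k, |P12 j k|) * ‖v‖ := by ring
  exact le_one_add_add_of_sq_le_add_mul (norm_nonneg v) (by positivity) (by positivity) hquad

end Matrix

theorem QMI_feasibleSet_bounded_general
    (q r : ℕ) (P11 : Matrix (Fin q) (Fin q) ℝ) (P12 : Matrix (Fin q) (Fin r) ℝ)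
    (P22 : Matrix (Fin r) (Fin r) ℝ)
    (hP22 : (-P22).PosDef) :
    ∃ C : ℝ, 0 ≤ C ∧ ∀ Z : Matrix (Fin r) (Fin q) ℝ,
      ((Matrix.fromRows (1 : Matrix (Fin q) (Fin q) ℝ) Z)ᵀ *
          Matrix.fromBlocks P11 P12 P12ᵀ P22 *
          Matrix.fromRows (1 : Matrix (Fin q) (Fin q) ℝ) Z).PosSemidef →
      ∀ i j, |Z i j| ≤ C := by
  set c := (-P22)⁻¹.trace
  have hc : 0 ≤ c := hP22.inv.posSemidef.trace_nonneg
  let bound (j : Fin q) : ℝ := 1 + c * |P11 j j| + 2 * c * ∑ k, |P12 j k|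
  have hbound (j : Fin q) : 0 ≤ bound j := by positivity
  refine ⟨∑ j, bound j, Finset.sum_nonneg fun j _ => hbound j, fun Z hZ i j => ?_⟩
  calc |Z i j| = ‖Z.col j i‖ := rfl
    _ ≤ ‖Z.col j‖ := norm_le_pi_norm _ i
    _ ≤ bound j := norm_col_le_of_posSemidef_fromRows_one hP22 hZ j
    _ ≤ ∑ j, bound j := Finset.single_le_sum (fun j _ => hbound j) (Finset.mem_univ j)

/-- if `Π₂₂ ≺ 0`, the feasible set
`Z_r(Π) = { Z : [I; Z]ᵀ Π [I; Z] ⪰ 0 }` is bounded: there is `C ≥ 0` bounding all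
entries of every feasible `Z`. -/
theorem QMI_feasibleSet_bounded
    (q r : ℕ) (P11 : Matrix (Fin q) (Fin q) ℝ) (P12 : Matrix (Fin q) (Fin r) ℝ)
    (P22 : Matrix (Fin r) (Fin r) ℝ)
    (hP11 : P11.IsSymm) (hP22 : (-P22).PosDef) :
    ∃ C : ℝ, 0 ≤ C ∧ ∀ Z : Matrix (Fin r) (Fin q) ℝ,
      ((Matrix.fromRows (1 : Matrix (Fin q) (Fin q) ℝ) Z)ᵀ *
          Matrix.fromBlocks P11 P12 P12ᵀ P22 *
          Matrix.fromRows (1 : Matrix (Fin q) (Fin q) ℝ) Z).PosSemidef →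
      ∀ i j, |Z i j| ≤ C :=
  QMI_feasibleSet_bounded_general q r P11 P12 P22 hP22
end

section
/- Consistency-set QMI: Let X₊ ∈ ℝ^{n×N}, Φ ∈ ℝ^{d×N}, and Π ∈ S^{n+N}. Define Υ := [[I, X₊],[0, -Φ]] Π [[I, X₊],[0, -Φ]]ᵀ. Then for any Θ ∈ ℝ^{n×d}, the noise matrix W := X₊ - ΘΦ satisfies [I; Wᵀ]ᵀ Π [I; Wᵀ] ⪰ 0 if and only if [I; Θᵀ]ᵀ Υ [I; Θᵀ] ⪰ 0. -/
open Matrix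

theorem Matrix.fromBlocks_one_neg_transpose_mul_fromRows_one {R m n p : Type*} [CommRing R]
    [Fintype m] [Fintype p] [DecidableEq m]
    (X : Matrix m n R) (Φ : Matrix p n R) (Θ : Matrix m p R) :
    (fromBlocks (1 : Matrix m m R) X 0 (-Φ))ᵀ * fromRows (1 : Matrix m m R) Θᵀ =
      fromRows 1 (X - Θ * Φ)ᵀ := by
  rw [fromBlocks_transpose, fromBlocks_mul_fromRows]
  simp [transpose_mul, sub_eq_add_neg, add_comm]

theorem consistency_QMI_general
    (n N d : ℕ) (Xp : Matrix (Fin n) (Fin N) ℝ) (Φ : Matrix (Fin d) (Fin N) ℝ)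
    (Pi : Matrix (Fin n ⊕ Fin N) (Fin n ⊕ Fin N) ℝ)
    (Θ : Matrix (Fin n) (Fin d) ℝ) :
    ((Matrix.fromRows (1 : Matrix (Fin n) (Fin n) ℝ) (Xp - Θ * Φ)ᵀ)ᵀ * Pi *
        Matrix.fromRows (1 : Matrix (Fin n) (Fin n) ℝ) (Xp - Θ * Φ)ᵀ).PosSemidef ↔
    ((Matrix.fromRows (1 : Matrix (Fin n) (Fin n) ℝ) Θᵀ)ᵀ *
        (Matrix.fromBlocks (1 : Matrix (Fin n) (Fin n) ℝ) Xp 0 (-Φ) * Pi *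
          (Matrix.fromBlocks (1 : Matrix (Fin n) (Fin n) ℝ) Xp 0 (-Φ))ᵀ) *
        Matrix.fromRows (1 : Matrix (Fin n) (Fin n) ℝ) Θᵀ).PosSemidef := by
  rw [← fromBlocks_one_neg_transpose_mul_fromRows_one, Matrix.transpose_mul,
    transpose_transpose]
  simp only [Matrix.mul_assoc]

/-- consistency-set QMI: with `Υ := [[I, X₊],[0, -Φ]] Π [[I, X₊],[0, -Φ]]ᵀ`,
for any `Θ`, the noise `W := X₊ - Θ Φ` satisfies `[I; Wᵀ]ᵀ Π [I; Wᵀ] ⪰ 0` iff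
`[I; Θᵀ]ᵀ Υ [I; Θᵀ] ⪰ 0`. -/
theorem consistency_QMI
    (n N d : ℕ) (Xp : Matrix (Fin n) (Fin N) ℝ) (Φ : Matrix (Fin d) (Fin N) ℝ)
    (Pi : Matrix (Fin n ⊕ Fin N) (Fin n ⊕ Fin N) ℝ) (hPi : Pi.IsSymm)
    (Θ : Matrix (Fin n) (Fin d) ℝ) :
    ((Matrix.fromRows (1 : Matrix (Fin n) (Fin n) ℝ) (Xp - Θ * Φ)ᵀ)ᵀ * Pi *
        Matrix.fromRows (1 : Matrix (Fin n) (Fin n) ℝ) (Xp - Θ * Φ)ᵀ).PosSemidef ↔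
    ((Matrix.fromRows (1 : Matrix (Fin n) (Fin n) ℝ) Θᵀ)ᵀ *
        (Matrix.fromBlocks (1 : Matrix (Fin n) (Fin n) ℝ) Xp 0 (-Φ) * Pi *
          (Matrix.fromBlocks (1 : Matrix (Fin n) (Fin n) ℝ) Xp 0 (-Φ))ᵀ) *
        Matrix.fromRows (1 : Matrix (Fin n) (Fin n) ℝ) Θᵀ).PosSemidef :=
  consistency_QMI_general n N d Xp Φ Pi Θ
end
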